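/- arXiv:1503.07704 — 2 statements merged into one kernel-verified Lean document; each statement's English description precedes it below -/
import Mathlib

section
/- Let N ≥ 1, p ∈ (2,∞), q_* := p − N/(N+1), η := 1/(N(p−2)+p), B_0 := ((p−2)/p)·η^{1/(p−1)}, and for A > 0 let B_A(y) := (A − B_0|y|^{p/(p−1)})_+^{(p−1)/(p−2)} for y ∈ ℝ^N (a C^1 function). Then there exists A_sub > 0, depending only on N and p, such that for every A ∈ (0, A_sub] and every y ∈ ℝ^N, |∇B_A(y)|^{q_*} + η(p−2)(N+1) y·∇B_A(y) − pη(N+1) B_A(y) ≤ 0. -/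
open MeasureTheory Real Metric

noncomputable section

abbrev Euc (N : ℕ) := EuclideanSpace ℝ (Fin N)

/-!
Inside the support, write `u = A - B₀|y|^{p/(p-1)} > 0` and `K = η^{1/(p-1)}`.
Then `∇B_A(y) = -K u^{1/(p-2)} |y|^{p/(p-1)-2} y`, and since `B₀ = (p-2)K/p` the drift
and reaction terms add up to `-pη(N+1) A u^{1/(p-2)}`. Using `u ≤ A` and
`B₀|y|^{p/(p-1)} ≤ A`, the gradient term is at most `K^{q_*} B₀^{-q_*/p} A^{1+δ} u^{1/(p-2)}`
with `δ = (q_*-1)/(p-2) + q_*/p - 1`, which is positive because `q_* > p - 1`; so the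
inequality holds once `A^δ` is small. Outside the support `B_A` vanishes, which is its
minimum, so its gradient vanishes as well.
-/

section RadialProfile

variable {E : Type*} [NormedAddCommGroup E]

/-- With `b = B₀`, `m = p/(p-1)` and `α = (p-1)/(p-2)` this is the Barenblatt profile `B_A`. -/
def truncatedRadialProfile (b m α A : ℝ) (z : E) : ℝ := max (A - b * ‖z‖ ^ m) 0 ^ α

theorem truncatedRadialProfile_of_nonpos {b m α A : ℝ} (hα : α ≠ 0) {y : E}
    (hy : A - b * ‖y‖ ^ m ≤ 0) : truncatedRadialProfile b m α A y = 0 := by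
  rw [truncatedRadialProfile, max_eq_right hy, zero_rpow hα]

theorem norm_smul_norm_rpow_sub_two [NormedSpace ℝ E] {m : ℝ} (hm : m ≠ 1) (c : ℝ) (y : E) :
    ‖(c * ‖y‖ ^ (m - 2)) • y‖ = |c| * ‖y‖ ^ (m - 1) := by
  rw [norm_smul, norm_mul, Real.norm_eq_abs, Real.norm_of_nonneg (by positivity), mul_assoc,
    ← rpow_add_one' (norm_nonneg y) (by contrapose! hm; linarith)]
  ring_nf

variable [InnerProductSpace ℝ E]

theorem inner_smul_norm_rpow_sub_two {m : ℝ} (hm : m ≠ 0) (c : ℝ) (y : E) :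
    inner ℝ y ((c * ‖y‖ ^ (m - 2)) • y) = c * ‖y‖ ^ m := by
  rw [real_inner_smul_right, real_inner_self_eq_norm_sq, mul_assoc, ← rpow_natCast,
    ← rpow_add' (norm_nonneg y) (by simpa using hm)]
  ring_nf

theorem IsLocalMin.gradient_eq_zero [CompleteSpace E] {f : E → ℝ} {y : E}
    (h : IsLocalMin f y) : gradient f y = 0 := by
  simp [gradient, h.fderiv_eq_zero]

theorem gradient_truncatedRadialProfile_of_nonpos [CompleteSpace E] {b m α A : ℝ}
    (hα : α ≠ 0) {y : E} (hy : A - b * ‖y‖ ^ m ≤ 0) :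
    gradient (truncatedRadialProfile b m α A) y = 0 :=
  IsLocalMin.gradient_eq_zero <| .of_forall fun z => by
    rw [truncatedRadialProfile_of_nonpos hα hy, truncatedRadialProfile]
    positivity

theorem hasGradientAt_truncatedRadialProfile [CompleteSpace E] {b m α A : ℝ} (hm : 1 < m)
    {y : E} (hy : 0 < A - b * ‖y‖ ^ m) :
    HasGradientAt (truncatedRadialProfile b m α A)
      ((-(α * b * m * (A - b * ‖y‖ ^ m) ^ (α - 1)) * ‖y‖ ^ (m - 2)) • y) y := by
  have hfd : HasFDerivAt (fun z : E => (A - b * ‖z‖ ^ m) ^ α)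
      ((α * (A - b * ‖y‖ ^ m) ^ (α - 1)) • -(b • (m * ‖y‖ ^ (m - 2)) • innerSL ℝ y)) y :=
    (((hasFDerivAt_norm_rpow y hm).const_smul b).const_sub A).rpow_const (Or.inl hy.ne')
  have hsupp : ∀ᶠ z in nhds y, 0 < A - b * ‖z‖ ^ m := by
    have hcont : Continuous fun z : E => A - b * ‖z‖ ^ m :=
      continuous_const.sub <| continuous_const.mul <|
        continuous_norm.rpow_const fun _ => Or.inr (by linarith)
    exact continuousAt_const.eventually_lt hcont.continuousAt hy
  rw [hasGradientAt_iff_hasFDerivAt]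
  refine (hfd.congr_of_eventuallyEq (hsupp.mono fun z hz => ?_)).congr_fderiv ?_
  · simp only [truncatedRadialProfile, max_eq_left hz.le]
  · ext z
    simp only [smul_neg, neg_apply, smul_apply, coe_innerSL_apply, smul_eq_mul, neg_mul,
      neg_smul, map_neg, map_smul, InnerProductSpace.toDual_apply_apply, neg_inj]
    ring

end RadialProfile

theorem barenblatt_gradient_rpow_le {p q a K b A u r D : ℝ} (hp : 1 < p) (hq : 1 ≤ q)
    (ha : 0 ≤ a) (hK : 0 < K) (hb : 0 < b) (hu : 0 < u) (hr : 0 ≤ r)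
    (hbr : b * r ^ (p / (p - 1)) = A - u)
    (hA : A ^ (a * (q - 1) + q / p - 1) ≤ D * b ^ (q / p) / K ^ q) :
    (K * u ^ a * r ^ (p / (p - 1) - 1)) ^ q ≤ D * A * u ^ a := by
  have hp1 : 0 < p - 1 := by linarith
  have hsA : r ^ (p / (p - 1)) ≤ A / b := by
    rw [le_div_iff₀ hb]; nlinarith
  have huA : u ≤ A := by nlinarith [rpow_nonneg hr (p / (p - 1))]
  have hA0 : 0 < A := hu.trans_le huA
  have hsplit : (K * u ^ a * r ^ (p / (p - 1) - 1)) ^ q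
      = K ^ q * u ^ a * u ^ (a * (q - 1)) * (r ^ (p / (p - 1))) ^ (q / p) := by
    have hexp : (p / (p - 1) - 1) * q = p / (p - 1) * (q / p) := by
      field_simp; ring
    rw [mul_rpow (by positivity) (by positivity), mul_rpow hK.le (by positivity),
      ← rpow_mul hu.le, ← rpow_mul hr, hexp, rpow_mul hr, mul_assoc (K ^ q) (u ^ a),
      ← rpow_add hu, mul_assoc]
    ring_nf
  calc (K * u ^ a * r ^ (p / (p - 1) - 1)) ^ q
      = K ^ q * u ^ a * u ^ (a * (q - 1)) * (r ^ (p / (p - 1))) ^ (q / p) := hsplit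
    _ ≤ K ^ q * u ^ a * A ^ (a * (q - 1)) * (A / b) ^ (q / p) := by
      gcongr
    _ = K ^ q / b ^ (q / p) * A ^ (a * (q - 1) + q / p - 1) * A * u ^ a := by
      rw [div_rpow hA0.le hb.le, mul_assoc _ _ A, ← rpow_add_one hA0.ne', sub_add_cancel,
        rpow_add hA0]
      field_simp
    _ ≤ K ^ q / b ^ (q / p) * (D * b ^ (q / p) / K ^ q) * A * u ^ a := by gcongr
    _ = D * A * u ^ a := by field_simp

/-- The paper's `A_sub`, with `c = η(N+1)` and `K = η^{1/(p-1)}`. -/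
def subsolutionThreshold (p q c b K : ℝ) : ℝ :=
  (p * c * b ^ (q / p) / K ^ q) ^ ((p - 2)⁻¹ * (q - 1) + q / p - 1)⁻¹

theorem barenblatt_subsolution_scalar {p q K b c A u r : ℝ} (hp : 2 < p) (hq : p - 1 < q)
    (hK : 0 < K) (hb : b = (p - 2) / p * K) (hc : 0 ≤ c) (hu : 0 < u) (hr : 0 ≤ r)
    (hbr : b * r ^ (p / (p - 1)) = A - u) (hA : A ≤ subsolutionThreshold p q c b K) :
    (K * u ^ (p - 2)⁻¹ * r ^ (p / (p - 1) - 1)) ^ q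
        + c * (p - 2) * (-(K * u ^ (p - 2)⁻¹) * r ^ (p / (p - 1)))
        - p * c * (u * u ^ (p - 2)⁻¹) ≤ 0 := by
  have hp2 : 0 < p - 2 := by linarith
  have hb0 : 0 < b := by rw [hb]; positivity
  have hδ : 0 < (p - 2)⁻¹ * (q - 1) + q / p - 1 := by
    have : 1 < (p - 2)⁻¹ * (q - 1) := by rw [inv_mul_eq_div, one_lt_div hp2]; linarith
    have : 0 < q / p := by apply div_pos <;> linarith
    linarith
  have hgrad := barenblatt_gradient_rpow_le (by linarith) (by linarith) (by positivity) hK hb0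
    hu hr hbr ((le_rpow_inv_iff_of_pos (hu.le.trans (by nlinarith [rpow_nonneg hr (p / (p - 1))]))
      (by positivity) hδ).mp hA)
  have hdrift : (p - 2) * K * r ^ (p / (p - 1)) = p * (A - u) := by
    rw [← hbr, hb]; field_simp
  linear_combination hgrad - c * u ^ (p - 2)⁻¹ * hdrift

theorem barenblattSubsolution_general
    (N : ℕ) (p : ℝ) (hp : 2 < p)
    (q η B0 : ℝ)
    (hq : q = p - (N : ℝ) / ((N : ℝ) + 1))
    (hη : η = 1 / ((N : ℝ) * (p - 2) + p))
    (hB0 : B0 = (p - 2) / p * η ^ (1 / (p - 1)))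
    (B : ℝ → Euc N → ℝ)
    (hB : ∀ A y, B A y = (max (A - B0 * ‖y‖ ^ (p / (p - 1))) 0) ^ ((p - 1) / (p - 2))) :
    ∃ Asub : ℝ, 0 < Asub ∧
      ∀ A : ℝ, 0 < A → A ≤ Asub → ∀ y : Euc N,
        ‖gradient (B A) y‖ ^ q +
            η * (p - 2) * ((N : ℝ) + 1) * (inner ℝ y (gradient (B A) y) : ℝ) -
          p * η * ((N : ℝ) + 1) * B A y ≤ 0 := by
  have hp2 : 0 < p - 2 := by linarith
  have hα : (p - 1) / (p - 2) = 1 + (p - 2)⁻¹ := by field_simp; ring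
  obtain rfl : B = truncatedRadialProfile B0 (p / (p - 1)) (1 + (p - 2)⁻¹) :=
    funext₂ fun A y => by rw [hB, hα, truncatedRadialProfile]
  have hη0 : 0 < η := by rw [hη]; positivity
  set K := η ^ (1 / (p - 1))
  have hK0 : 0 < K := by positivity
  have hB00 : 0 < B0 := by rw [hB0]; positivity
  have hm : 1 < p / (p - 1) := by rw [one_lt_div] <;> linarith
  have hqp : p - 1 < q := by
    have : (N : ℝ) / (N + 1) < 1 := by rw [div_lt_one (by positivity)]; linarith
    linarith
  refine ⟨subsolutionThreshold p q (η * (N + 1)) B0 K,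
    by unfold subsolutionThreshold; positivity, fun A _ hAsub y => ?_⟩
  rcases le_or_gt (A - B0 * ‖y‖ ^ (p / (p - 1))) 0 with hout | hin
  · have hα0 : 1 + (p - 2)⁻¹ ≠ 0 := by positivity
    simp [gradient_truncatedRadialProfile_of_nonpos hα0 hout,
      truncatedRadialProfile_of_nonpos hα0 hout, zero_rpow (by linarith : q ≠ 0)]
  · have hcoef : (1 + (p - 2)⁻¹) * B0 * (p / (p - 1)) = K := by
      rw [hB0]; field_simp [(by linarith : p - 1 ≠ 0)]; ring
    have hgrad := hasGradientAt_truncatedRadialProfile (α := 1 + (p - 2)⁻¹) hm hin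
    rw [hcoef, add_sub_cancel_left] at hgrad
    rw [hgrad.gradient, norm_smul_norm_rpow_sub_two hm.ne',
      inner_smul_norm_rpow_sub_two (by positivity), abs_neg, abs_of_pos (by positivity),
      truncatedRadialProfile, max_eq_left hin.le, rpow_add hin, rpow_one]
    linear_combination barenblatt_subsolution_scalar hp hqp hK0 hB0 (by positivity) hin
      (norm_nonneg y) (by ring) hAsub

/-- Lemma 3.2: there is `A_sub > 0`, depending only on `N` and `p`, such that for every
`A ∈ (0, A_sub]` the Barenblatt profile `B_A` satisfies the pointwise subsolution inequality
`|∇B_A|^{q_*} + η(p−2)(N+1) y·∇B_A − pη(N+1) B_A ≤ 0`. -/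
theorem barenblattSubsolution
    (N : ℕ) (hN : 1 ≤ N) (p : ℝ) (hp : 2 < p)
    (q η B0 : ℝ)
    (hq : q = p - (N : ℝ) / ((N : ℝ) + 1))
    (hη : η = 1 / ((N : ℝ) * (p - 2) + p))
    (hB0 : B0 = (p - 2) / p * η ^ (1 / (p - 1)))
    (B : ℝ → Euc N → ℝ)
    (hB : ∀ A y, B A y = (max (A - B0 * ‖y‖ ^ (p / (p - 1))) 0) ^ ((p - 1) / (p - 2))) :
    ∃ Asub : ℝ, 0 < Asub ∧
      ∀ A : ℝ, 0 < A → A ≤ Asub → ∀ y : Euc N,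
        ‖gradient (B A) y‖ ^ q +
            η * (p - 2) * ((N : ℝ) + 1) * (inner ℝ y (gradient (B A) y) : ℝ) -
          p * η * ((N : ℝ) + 1) * B A y ≤ 0 :=
  barenblattSubsolution_general N p hp q η B0 hq hη hB0 B hB
end
end

section
/- Let (X,d) be a metric space, let Σ be a set of continuous curves Φ : [0,∞) → X, and define Ω := { f ∈ X : there exist Φ ∈ Σ and a sequence t_k → ∞ with d(Φ(t_k), f) → 0 }. Assume: (i) Ω is non-empty and compact; (ii) Ω is uniformly stable for Σ: for every ε > 0 there exists δ > 0 such that every Φ ∈ Σ with dist(Φ(0), Ω) ≤ δ satisfies dist(Φ(t), Ω) ≤ ε for all t ≥ 0. Let ϑ : [0,∞) → X be a continuous curve such that: (a) the orbit { ϑ(t) : t ≥ 0 } is relatively compact in X and the family of translates { s ↦ ϑ(s+τ) : τ > 0 } is relatively compact in C([0,T];X) (with the uniform metric) for every T > 0; (b) every curve Θ : [0,∞) → X that is, for each T > 0, the uniform limit on [0,T] of a sequence of translates s ↦ ϑ(s+t_k) with t_k → ∞, belongs to Σ. Then the ω-limit set of ϑ, namely { f ∈ X : there exists a sequence t_k →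 ∞ with d(ϑ(t_k), f) → 0 }, is contained in Ω. -/
open Filter Metric Set
open scoped Topology

/-!
Suppose an ω-limit point `f` of `ϑ` lies at distance `ε > 0` from `Ω`, and let `δ < ε` be the
stability radius for `ε / 2`. A locally uniform limit of translates of `ϑ` lies in `S` and has its
orbit in the compact set `K`, hence has ω-limit points in `Ω`; so `ϑ` comes `δ`-close to `Ω` at
arbitrarily late times, while `ϑ(t_k) → f` is eventually farther than `δ` from `Ω`. This produces
crossing times `A_n → ∞`: the last moment before some `t_{k_n}` at which `ϑ` is `δ`-close to `Ω`.
A limit `Θ ∈ S` of the translates `ϑ(· + A_n)` starts `δ`-close to `Ω`, so it stays `ε / 2`-close.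
If the gaps `t_{k_n} - A_n` do not diverge, `f` is a value of `Θ`, which is absurd; if they do,
`Θ` stays `δ`-far from `Ω` on `(0, ∞)`, contradicting that it has ω-limit points in `Ω`.
-/

theorem exists_strictMono_forall_of_refine (P : ℕ → (ℕ → ℕ) → Prop)
    (hrefine : ∀ n (u : ℕ → ℕ), ∃ v, StrictMono v ∧ P n (u ∘ v))
    (hsubseq : ∀ n (u d e : ℕ → ℕ), P n u → Tendsto e atTop atTop →
      (∀ᶠ k in atTop, d k = u (e k)) → P n d) :
    ∃ d : ℕ → ℕ, StrictMono d ∧ ∀ n, P n d := by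
  choose v hv hP using hrefine
  -- `q (n + 1)` refines `q n`; from `m` on, the diagonal `q (n + 1) n` runs inside `q (m + 1)`.
  let q : ℕ → ℕ → ℕ := fun n => Nat.rec id (fun m qm => qm ∘ v m qm) n
  have hq : ∀ m j, ∃ w : ℕ → ℕ, StrictMono w ∧ q (m + j) = q m ∘ w := by
    intro m j
    induction j with
    | zero => exact ⟨id, strictMono_id, rfl⟩
    | succ j ih =>
      obtain ⟨w, hw, hqw⟩ := ih
      refine ⟨w ∘ v (m + j) (q (m + j)), hw.comp (hv _ _), ?_⟩
      change q (m + j) ∘ v (m + j) (q (m + j)) = _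
      rw [hqw]
      rfl
  have hqmono : ∀ n, StrictMono (q n) := fun n => by
    obtain ⟨w, hw, hqw⟩ := hq 0 n
    rw [Nat.zero_add] at hqw
    rw [hqw]
    exact hw
  refine ⟨fun n => q (n + 1) n, strictMono_nat_of_lt_succ fun n => ?_, fun m => ?_⟩
  · obtain ⟨w, hw, hqw⟩ := hq (n + 1) 1
    calc q (n + 1) n < q (n + 1) (n + 1) := hqmono (n + 1) n.lt_succ_self
      _ ≤ q (n + 1) (w (n + 1)) := (hqmono (n + 1)).monotone (hw.id_le _)
      _ = q (n + 1 + 1) (n + 1) := by rw [hqw]; rfl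
  · choose w hw hqw using hq (m + 1)
    refine hsubseq m (q (m + 1)) _ (fun k => w (k - m) k) (hP m (q m))
      (tendsto_atTop_mono (fun k => (hw _).id_le k) tendsto_id) ?_
    filter_upwards [eventually_ge_atTop m] with k hk
    obtain ⟨j, rfl⟩ := Nat.exists_eq_add_of_le hk
    rw [Nat.add_sub_cancel_left, ← Function.comp_apply (f := q (m + 1)), ← hqw,
      Nat.add_right_comm]

theorem exists_tendstoUniformlyOn_forall {ι α β κ : Type*} [UniformSpace β] [T2Space β]
    [Nonempty κ] {F : ι → α → β} {l : Filter ι} [l.NeBot] {s : κ → Set α}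
    (h : ∀ n, ∃ g, TendstoUniformlyOn F g l (s n)) :
    ∃ g, ∀ n, TendstoUniformlyOn F g l (s n) := by
  choose g hg using h
  refine ⟨fun x => g (Classical.epsilon fun n => x ∈ s n) x,
    fun n => (hg n).congr_right fun x hx => ?_⟩
  exact tendsto_nhds_unique ((hg n).tendsto_at hx)
    ((hg _).tendsto_at (Classical.epsilon_spec (p := fun n => x ∈ s n) ⟨n, hx⟩))

theorem exists_strictMono_tendstoUniformlyOn_forall {α β : Type*} [UniformSpace β] [T2Space β]
    (F : ℕ → α → β) (s : ℕ → Set α)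
    (h : ∀ n (u : ℕ → ℕ), ∃ v : ℕ → ℕ, StrictMono v ∧
      ∃ g, TendstoUniformlyOn (fun k => F (u (v k))) g atTop (s n)) :
    ∃ d : ℕ → ℕ, StrictMono d ∧ ∃ g, ∀ n, TendstoUniformlyOn (fun k => F (d k)) g atTop (s n) := by
  obtain ⟨d, hd, hP⟩ := exists_strictMono_forall_of_refine
    (fun n u => ∃ g, TendstoUniformlyOn (fun k => F (u k)) g atTop (s n)) h
    fun n u d e ⟨g, hg⟩ he hde =>
      ⟨g, (hg.seq_tendstoUniformlyOn e he).congr (hde.mono fun k hk x _ => by rw [hk])⟩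
  exact ⟨d, hd, exists_tendstoUniformlyOn_forall hP⟩

theorem ContinuousOn.exists_last_le {g : ℝ → ℝ} {a b c : ℝ} (hab : a ≤ b)
    (hg : ContinuousOn g (Icc a b)) (ha : g a ≤ c) (hb : c < g b) :
    ∃ x ∈ Ico a b, g x ≤ c ∧ ∀ y ∈ Ioc x b, c < g y := by
  have hE : IsCompact (Icc a b ∩ g ⁻¹' Iic c) := isCompact_Icc.of_isClosed_subset
    (hg.preimage_isClosed_of_isClosed isClosed_Icc isClosed_Iic) inter_subset_left
  obtain ⟨x, ⟨hxab, hxc⟩, hmax⟩ := hE.exists_isGreatest ⟨a, left_mem_Icc.2 hab, ha⟩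
  refine ⟨x, ⟨hxab.1, hxab.2.lt_of_ne ?_⟩, hxc, fun y hy => not_le.1 fun hyc => ?_⟩
  · rintro rfl
    exact hb.not_ge hxc
  · exact hy.1.not_ge (hmax ⟨⟨hxab.1.trans hy.1.le, hy.2⟩, hyc⟩)

theorem exists_seq_last_le {g : ℝ → ℝ} {c : ℝ} {t : ℕ → ℝ} (hg : ContinuousOn g (Ici 0))
    (hlow : ∃ᶠ τ in atTop, g τ ≤ c) (ht : Tendsto t atTop atTop)
    (hhigh : ∀ᶠ k in atTop, c < g (t k)) :
    ∃ (A : ℕ → ℝ) (κ : ℕ → ℕ), (∀ n : ℕ, (n : ℝ) < A n) ∧ (∀ n, n ≤ κ n) ∧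
      (∀ n, A n ≤ t (κ n)) ∧ (∀ n, g (A n) ≤ c) ∧ ∀ n, ∀ s ∈ Ioc (A n) (t (κ n)), c < g s := by
  have h : ∀ n : ℕ, ∃ A k, (n : ℝ) < A ∧ n ≤ k ∧ A ≤ t k ∧ g A ≤ c ∧
      ∀ s ∈ Ioc A (t k), c < g s := by
    intro n
    obtain ⟨τ, hτn, hτ⟩ := frequently_atTop.1 hlow (n + 1)
    obtain ⟨k, hτk, hk, hkn⟩ :=
      ((ht.eventually_ge_atTop τ).and (hhigh.and (eventually_ge_atTop n))).exists
    have hτ0 : (0 : ℝ) ≤ τ := by linarith [n.cast_nonneg (α := ℝ)]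
    obtain ⟨A, hA, hAc, hgap⟩ := ContinuousOn.exists_last_le hτk
      (hg.mono fun s hs => hτ0.trans hs.1) hτ hk
    exact ⟨A, k, by linarith [hA.1], hkn, hA.2.le, hAc, hgap⟩
  choose A κ hAn hκn hAt hAc hgap using h
  exact ⟨A, κ, hAn, hκn, hAt, hAc, hgap⟩

theorem frequently_infDist_lt {X : Type*} [PseudoMetricSpace X] {Φ : ℝ → X} {K Ω : Set X}
    (hK : IsCompact K) (hΦK : ∀ s, 0 ≤ s → Φ s ∈ K)
    (hΩ : ∀ g (t : ℕ → ℝ), Tendsto t atTop atTop → Tendsto (fun k => Φ (t k)) atTop (𝓝 g) → g ∈ Ω)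
    {η : ℝ} (hη : 0 < η) : ∃ᶠ s in atTop, infDist (Φ s) Ω < η := by
  obtain ⟨g, -, φ, hφ, hg⟩ := hK.tendsto_subseq fun n : ℕ => hΦK n n.cast_nonneg
  have ht : Tendsto (fun i => (φ i : ℝ)) atTop atTop :=
    tendsto_natCast_atTop_atTop.comp hφ.tendsto_atTop
  have hdist : Tendsto (fun i => infDist (Φ (φ i)) Ω) atTop (𝓝 0) := by
    have := ((continuous_infDist_pt Ω).tendsto g).comp hg
    rwa [infDist_zero_of_mem (hΩ g _ ht hg)] at this
  exact ht.frequently (hdist.eventually (gt_mem_nhds hη)).frequently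

def IsTranslateLimit {X : Type*} [UniformSpace X] (ϑ : ℝ → X) (a : ℕ → ℝ) (Θ : ℝ → X) : Prop :=
  ∀ T : ℝ, 0 < T → TendstoUniformlyOn (fun k s => ϑ (s + a k)) Θ atTop (Icc 0 T)

namespace IsTranslateLimit

variable {X : Type*} [UniformSpace X] {ϑ Θ : ℝ → X} {a : ℕ → ℝ}

theorem tendsto_apply (h : IsTranslateLimit ϑ a Θ) {s : ℝ} (hs : 0 ≤ s) :
    Tendsto (fun k => ϑ (s + a k)) atTop (𝓝 (Θ s)) :=
  (h (s + 1) (by linarith)).tendsto_at ⟨hs, by linarith⟩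

theorem frequently_mem (h : IsTranslateLimit ϑ a Θ) (ha : Tendsto a atTop atTop) {U : Set X}
    (hU : IsOpen U) (hΘ : ∃ᶠ s in atTop, Θ s ∈ U) : ∃ᶠ τ in atTop, ϑ τ ∈ U := by
  rw [frequently_atTop] at hΘ ⊢
  intro M
  obtain ⟨s, hs, hsU⟩ := hΘ 0
  obtain ⟨k, hkU, hkM⟩ :=
    (((h.tendsto_apply hs).eventually (hU.mem_nhds hsU)).and (ha.eventually_ge_atTop M)).exists
  exact ⟨s + a k, by linarith, hkU⟩

theorem mem_of_tendsto_gap (h : IsTranslateLimit ϑ a Θ) {b : ℕ → ℝ} {C : Set X}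
    (hC : IsClosed C) (hgap : Tendsto (b - a) atTop atTop)
    (hbC : ∀ k, ∀ s ∈ Ioc (a k) (b k), ϑ s ∈ C) {s : ℝ} (hs : 0 < s) : Θ s ∈ C :=
  hC.mem_of_tendsto (h.tendsto_apply hs.le) <| (hgap.eventually_ge_atTop s).mono fun k hk =>
    hbC k _ ⟨by linarith, by rw [Pi.sub_apply] at hk; linarith⟩

theorem exists_eq_of_not_tendsto_gap [T2Space X] (h : IsTranslateLimit ϑ a Θ)
    (hΘ : ContinuousOn Θ (Ici 0)) {b : ℕ → ℝ} (hab : ∀ k, a k ≤ b k)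
    (hgap : ¬Tendsto (b - a) atTop atTop) {f : X}
    (hbf : Tendsto (fun k => ϑ (b k)) atTop (𝓝 f)) : ∃ L, 0 ≤ L ∧ Θ L = f := by
  obtain ⟨C, hC⟩ : ∃ C, ∃ᶠ k in atTop, (b - a) k ∈ Icc 0 C := by
    rw [Filter.tendsto_atTop] at hgap
    push Not at hgap
    obtain ⟨C, hC⟩ := hgap
    exact ⟨C, hC.mono fun k hk => ⟨sub_nonneg.2 (hab k), hk.le⟩⟩
  obtain ⟨L, hL, φ, hφ, hφL⟩ := tendsto_subseq_of_frequently_bounded (isBounded_Icc 0 C) hC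
  rw [closure_Icc] at hL
  have hgapL : Tendsto (fun i => (b - a) (φ i)) atTop (𝓝[Icc 0 (L + 1)] L) :=
    tendsto_nhdsWithin_iff.2 ⟨hφL, (hφL.eventually (gt_mem_nhds (lt_add_one L))).mono
      fun i hi => ⟨sub_nonneg.2 (hab _), hi.le⟩⟩
  have hlim := ((h (L + 1) (by linarith [hL.1])).seq_tendstoUniformlyOn φ
    hφ.tendsto_atTop).tendsto_comp ((hΘ L hL.1).mono Icc_subset_Ici_self) hgapL
  simp only [Pi.sub_apply, sub_add_cancel] at hlim
  exact ⟨L, hL.1, tendsto_nhds_unique hlim (hbf.comp hφ.tendsto_atTop)⟩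

end IsTranslateLimit

theorem exists_isTranslateLimit {X : Type*} [UniformSpace X] [T2Space X] {ϑ : ℝ → X}
    (htranslates : ∀ T : ℝ, 0 < T → ∀ τ : ℕ → ℝ, (∀ k, 0 < τ k) →
      ∃ φ : ℕ → ℕ, StrictMono φ ∧ ∃ Θ : ℝ → X,
        TendstoUniformlyOn (fun k s => ϑ (s + τ (φ k))) Θ atTop (Icc 0 T))
    {a : ℕ → ℝ} (ha : ∀ k, 0 < a k) :
    ∃ ψ : ℕ → ℕ, StrictMono ψ ∧ ∃ Θ, IsTranslateLimit ϑ (a ∘ ψ) Θ := by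
  obtain ⟨ψ, hψ, Θ, hΘ⟩ := exists_strictMono_tendstoUniformlyOn_forall
    (fun k s => ϑ (s + a k)) (fun n : ℕ => Icc 0 (n + 1))
    fun n u => htranslates (n + 1) n.cast_add_one_pos (a ∘ u) fun k => ha _
  refine ⟨ψ, hψ, Θ, fun T _ => ?_⟩
  obtain ⟨n, hn⟩ := exists_nat_ge T
  exact (hΘ n).mono (Icc_subset_Icc_right (by linarith))

theorem mem_of_tendsto_of_uniformlyStable {X : Type*} [MetricSpace X] {C : Set (ℝ → X)}
    {Ω : Set X} {ϑ : ℝ → X} (hΩ : IsClosed Ω) (hΩne : Ω.Nonempty)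
    (hCcont : ∀ Θ ∈ C, ContinuousOn Θ (Ici 0))
    (hCclose : ∀ Θ ∈ C, ∀ η > 0, ∃ᶠ s in atTop, infDist (Θ s) Ω < η)
    (hstable : ∀ ε > 0, ∃ δ > 0, ∀ Θ ∈ C, infDist (Θ 0) Ω ≤ δ →
      ∀ s ≥ 0, infDist (Θ s) Ω ≤ ε)
    (hϑcont : ContinuousOn ϑ (Ici 0)) (hϑclose : ∀ η > 0, ∃ᶠ τ in atTop, infDist (ϑ τ) Ω < η)
    (hext : ∀ a : ℕ → ℝ, (∀ k, 0 < a k) → Tendsto a atTop atTop →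
      ∃ ψ : ℕ → ℕ, StrictMono ψ ∧ ∃ Θ ∈ C, IsTranslateLimit ϑ (a ∘ ψ) Θ)
    {f : X} {t : ℕ → ℝ} (ht : Tendsto t atTop atTop)
    (htf : Tendsto (fun k => ϑ (t k)) atTop (𝓝 f)) : f ∈ Ω := by
  by_contra hfΩ
  have hε : 0 < infDist f Ω := (hΩ.notMem_iff_infDist_pos hΩne).1 hfΩ
  obtain ⟨δ₀, hδ₀, hstab⟩ := hstable _ (half_pos hε)
  set δ := min δ₀ (infDist f Ω / 2)
  have hδ : 0 < δ := lt_min hδ₀ (half_pos hε)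
  have hfar : ∀ᶠ k in atTop, δ < infDist (ϑ (t k)) Ω :=
    (((continuous_infDist_pt Ω).tendsto f).comp htf).eventually_const_lt
      ((min_le_right _ _).trans_lt (half_lt_self hε))
  obtain ⟨A, κ, hAn, hκn, hAt, hAδ, hgap⟩ :=
    exists_seq_last_le ((continuous_infDist_pt Ω).comp_continuousOn hϑcont)
      ((hϑclose δ hδ).mono fun _ => le_of_lt) ht hfar
  obtain ⟨ψ, hψ, Θ, hΘC, hΘ⟩ := hext A (fun n => n.cast_nonneg.trans_lt (hAn n))
    (tendsto_atTop_mono (fun n => (hAn n).le) tendsto_natCast_atTop_atTop)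
  have hΘ0 : infDist (Θ 0) Ω ≤ δ :=
    (isClosed_le (continuous_infDist_pt Ω) continuous_const).mem_of_tendsto
      (hΘ.tendsto_apply le_rfl) (Eventually.of_forall fun k => by simpa using hAδ (ψ k))
  by_cases hB : Tendsto ((fun k => t (κ (ψ k))) - A ∘ ψ) atTop atTop
  · obtain ⟨s, hs, hs0⟩ := ((hCclose Θ hΘC δ hδ).and_eventually (eventually_gt_atTop 0)).exists
    exact hs.not_ge <| hΘ.mem_of_tendsto_gap (C := {x | δ ≤ infDist x Ω})
      (isClosed_le continuous_const (continuous_infDist_pt Ω)) hB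
      (fun k s hs => (hgap (ψ k) s hs).le) hs0
  · obtain ⟨L, hL, hΘL⟩ := hΘ.exists_eq_of_not_tendsto_gap (hCcont Θ hΘC) (fun k => hAt (ψ k)) hB
      (htf.comp ((tendsto_atTop_mono hκn tendsto_id).comp hψ.tendsto_atTop))
    have hΘLε := hstab Θ hΘC (hΘ0.trans (min_le_left _ _)) L hL
    rw [hΘL] at hΘLε
    linarith

/-- The abstract stability theorem (S-theorem) of Galaktionov and Vázquez.

Curves are maps `ℝ → X` considered on `[0,∞)`. `S` plays the role of the set of solutions
of the autonomous limit equation, `Ω` is its ω-limit set, and `ϑ` is a solution of an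
asymptotically small non-autonomous perturbation whose translates accumulate (uniformly on
compact time intervals) only on elements of `S`. Then the ω-limit set of `ϑ` is contained
in `Ω`. -/
theorem sTheorem
    {X : Type*} [MetricSpace X]
    (S : Set (ℝ → X))
    (hScont : ∀ Φ ∈ S, ContinuousOn Φ (Set.Ici (0:ℝ)))
    (Ω : Set X)
    (hΩdef : Ω = {f : X | ∃ Φ ∈ S, ∃ t : ℕ → ℝ,
      Tendsto t atTop atTop ∧ Tendsto (fun k => Φ (t k)) atTop (𝓝 f)})
    (hΩne : Ω.Nonempty) (hΩcomp : IsCompact Ω)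
    -- (ii) uniform stability of `Ω` for the autonomous flow `S`
    (hstable : ∀ ε : ℝ, 0 < ε → ∃ δ : ℝ, 0 < δ ∧
      ∀ Φ ∈ S, Metric.infDist (Φ 0) Ω ≤ δ →
        ∀ t : ℝ, 0 ≤ t → Metric.infDist (Φ t) Ω ≤ ε)
    (ϑ : ℝ → X)
    (hϑcont : ContinuousOn ϑ (Set.Ici (0:ℝ)))
    -- (a) the orbit of `ϑ` is relatively compact in `X` …
    (horbit : ∃ K : Set X, IsCompact K ∧ ∀ t : ℝ, 0 ≤ t → ϑ t ∈ K)
    -- … and the family of translates of `ϑ` is relatively compact in `C([0,T];X)`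
    (htranslates : ∀ T : ℝ, 0 < T → ∀ τ : ℕ → ℝ, (∀ k, 0 < τ k) →
      ∃ φ : ℕ → ℕ, StrictMono φ ∧ ∃ Θ : ℝ → X,
        TendstoUniformlyOn (fun k s => ϑ (s + τ (φ k))) Θ atTop (Set.Icc 0 T))
    -- (b) every locally uniform limit of translates `ϑ(· + t_k)`, `t_k → ∞`, belongs to `S`
    (hlimit : ∀ Θ : ℝ → X,
      (∃ t : ℕ → ℝ, Tendsto t atTop atTop ∧
        ∀ T : ℝ, 0 < T →
          TendstoUniformlyOn (fun k s => ϑ (s + t k)) Θ atTop (Set.Icc 0 T)) →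
      Θ ∈ S) :
    {f : X | ∃ t : ℕ → ℝ, Tendsto t atTop atTop ∧
        Tendsto (fun k => ϑ (t k)) atTop (𝓝 f)} ⊆ Ω := by
  obtain ⟨K, hK, hϑK⟩ := horbit
  let C := {Θ ∈ S | ∀ s, 0 ≤ s → Θ s ∈ K}
  have hext : ∀ a : ℕ → ℝ, (∀ k, 0 < a k) → Tendsto a atTop atTop →
      ∃ ψ : ℕ → ℕ, StrictMono ψ ∧ ∃ Θ ∈ C, IsTranslateLimit ϑ (a ∘ ψ) Θ := by
    intro a ha0 ha
    obtain ⟨ψ, hψ, Θ, hΘ⟩ := exists_isTranslateLimit htranslates ha0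
    refine ⟨ψ, hψ, Θ, ⟨hlimit Θ ⟨a ∘ ψ, ha.comp hψ.tendsto_atTop, hΘ⟩, fun s hs => ?_⟩, hΘ⟩
    exact hK.isClosed.mem_of_tendsto (hΘ.tendsto_apply hs)
      (Eventually.of_forall fun k => hϑK _ (add_nonneg hs (ha0 _).le))
  have hCclose : ∀ Θ ∈ C, ∀ η > 0, ∃ᶠ s in atTop, infDist (Θ s) Ω < η :=
    fun Θ hΘ _ hη => frequently_infDist_lt hK hΘ.2
      (fun g t ht hg => by rw [hΩdef]; exact ⟨Θ, hΘ.1, t, ht, hg⟩) hη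
  have hϑclose : ∀ η > 0, ∃ᶠ τ in atTop, infDist (ϑ τ) Ω < η := by
    intro η hη
    have ha : Tendsto (fun k : ℕ => (k : ℝ) + 1) atTop atTop :=
      tendsto_atTop_add_const_right _ 1 tendsto_natCast_atTop_atTop
    obtain ⟨ψ, hψ, Θ, hΘC, hΘ⟩ := hext _ (fun k => k.cast_add_one_pos) ha
    exact hΘ.frequently_mem (ha.comp hψ.tendsto_atTop)
      (isOpen_lt (continuous_infDist_pt Ω) continuous_const) (hCclose Θ hΘC η hη)
  rintro f ⟨t, ht, htf⟩
  exact mem_of_tendsto_of_uniformlyStable hΩcomp.isClosed hΩne (fun Θ hΘ => hScont Θ hΘ.1)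
    hCclose (fun ε hε => (hstable ε hε).imp fun _ hδ => ⟨hδ.1, fun Θ hΘ => hδ.2 Θ hΘ.1⟩)
    hϑcont hϑclose hext ht htf
end
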